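/- arXiv:2206.10962 — 6 statements merged into one kernel-verified Lean document; each statement's English description precedes it below -/
import Mathlib

section
/- Let (X, d) be a complete metric space, let φ : [0,∞) → [0,∞) be a comparison function, and let f : X → X satisfy d(f(x₁), f(x₂)) ≤ φ(d(x₁, x₂)) for all x₁, x₂ ∈ X. Then f has a unique fixed point x̄ ∈ X, and for every x₀ ∈ X the sequence of iterates fⁿ(x₀) converges to x̄. -/
/-!
The comparison property forces `φ t < t` for `t > 0`: otherwise monotonicity would keep every
iterate `φ^[n] t` above `t`. Hence `f` is nonexpansive and has at most one fixed point, and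
`d(fⁿ a, fⁿ b) ≤ φⁿ(d(a, b)) → 0`. Given `ε > 0`, once `d(x_N, x_{N+1}) < ε - φ ε` the map `f`
sends the ball of radius `ε` about `x_N` into itself, so every orbit is Cauchy; its limit is a
fixed point by continuity, and all orbits converge to it.
-/

open Filter Set Topology Metric Function

theorem lt_self_of_tendsto_iterate {φ : ℝ → ℝ} (hmono : MonotoneOn φ (Ici 0)) {t : ℝ}
    (ht : 0 < t) (hiter : Tendsto (fun n => φ^[n] t) atTop (𝓝 0)) : φ t < t := by
  by_contra! h
  have hle : ∀ n, t ≤ φ^[n] t := by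
    intro n
    induction n with
    | zero => exact le_rfl
    | succ n ih =>
      rw [iterate_succ_apply']
      exact h.trans (hmono ht.le (ht.le.trans ih) ih)
  exact (ge_of_tendsto' hiter hle).not_gt ht

section PhiContraction

variable {X : Type*} {φ : ℝ → ℝ} {f : X → X}

section Pseudo

variable [PseudoMetricSpace X] (hmono : MonotoneOn φ (Ici 0))
  (hf : ∀ x y, dist (f x) (f y) ≤ φ (dist x y))
include hmono hf

theorem dist_iterate_le_iterate_dist (a b : X) (n : ℕ) :
    dist (f^[n] a) (f^[n] b) ≤ φ^[n] (dist a b) := by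
  induction n with
  | zero => exact le_rfl
  | succ n ih =>
    simp only [iterate_succ_apply']
    exact (hf _ _).trans (hmono dist_nonneg (dist_nonneg.trans ih) ih)

theorem tendsto_dist_iterate (hiter : ∀ t, 0 ≤ t → Tendsto (fun n => φ^[n] t) atTop (𝓝 0))
    (a b : X) : Tendsto (fun n => dist (f^[n] a) (f^[n] b)) atTop (𝓝 0) :=
  squeeze_zero (fun _ => dist_nonneg) (dist_iterate_le_iterate_dist hmono hf a b)
    (hiter _ dist_nonneg)

theorem mapsTo_ball_of_dist_lt {x : X} {ε : ℝ} (hx : dist (f x) x < ε - φ ε) :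
    MapsTo f (ball x ε) (ball x ε) := by
  intro y hy
  rw [mem_ball] at hy ⊢
  calc dist (f y) x ≤ dist (f y) (f x) + dist (f x) x := dist_triangle _ _ _
    _ ≤ φ ε + dist (f x) x := by
      gcongr
      exact (hf y x).trans (hmono dist_nonneg (dist_nonneg.trans hy.le) hy.le)
    _ < ε := by linarith

theorem cauchySeq_iterate (hiter : ∀ t, 0 ≤ t → Tendsto (fun n => φ^[n] t) atTop (𝓝 0))
    (x₀ : X) : CauchySeq fun n => f^[n] x₀ := by
  rw [Metric.cauchySeq_iff']
  intro ε hε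
  have hgap : 0 < ε - φ ε := sub_pos.2 (lt_self_of_tendsto_iterate hmono hε (hiter ε hε.le))
  have hstep := tendsto_dist_iterate hmono hf hiter (f x₀) x₀
  obtain ⟨N, hN⟩ := (hstep.eventually (gt_mem_nhds hgap)).exists_forall_of_atTop
  have hmaps := mapsTo_ball_of_dist_lt hmono hf (x := f^[N] x₀) <| by
    simpa only [← iterate_succ_apply' f, iterate_succ_apply] using hN N le_rfl
  refine ⟨N, fun n hn => ?_⟩
  obtain ⟨k, rfl⟩ := Nat.exists_eq_add_of_le hn
  rw [add_comm, iterate_add_apply]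
  exact hmaps.iterate k (mem_ball_self hε)

end Pseudo

variable [MetricSpace X] (hlt : ∀ t, 0 < t → φ t < t)
  (hf : ∀ x y, dist (f x) (f y) ≤ φ (dist x y))
include hlt hf

theorem lipschitzWith_one_of_lt_self : LipschitzWith 1 f := by
  refine LipschitzWith.mk_one fun x y => ?_
  rcases eq_or_ne x y with rfl | hxy
  · simp
  · exact (hf x y).trans (hlt _ (dist_pos.2 hxy)).le

theorem eq_of_isFixedPt_of_lt_self {p q : X} (hp : IsFixedPt f p) (hq : IsFixedPt f q) :
    p = q := by
  by_contra hpq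
  have hpos := dist_pos.2 hpq
  have := hf p q
  rw [hp, hq] at this
  exact (hlt _ hpos).not_ge this

end PhiContraction

theorem phi_contraction_fixed_point_general {X : Type*} [MetricSpace X] [CompleteSpace X]
    [Nonempty X]
    (φ : ℝ → ℝ)
    (hmono : ∀ s t : ℝ, 0 ≤ s → s ≤ t → φ s ≤ φ t)
    (hiter : ∀ t : ℝ, 0 ≤ t → Tendsto (fun p => φ^[p] t) atTop (nhds 0))
    (f : X → X)
    (hf : ∀ x₁ x₂ : X, dist (f x₁) (f x₂) ≤ φ (dist x₁ x₂)) :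
    ∃ p : X, f p = p ∧ (∀ q : X, f q = q → q = p) ∧
      ∀ x₀ : X, Tendsto (fun n => f^[n] x₀) atTop (nhds p) := by
  have hmono' : MonotoneOn φ (Ici 0) := fun s hs _ _ hst => hmono s _ hs hst
  have hlt : ∀ t, 0 < t → φ t < t := fun t ht =>
    lt_self_of_tendsto_iterate hmono' ht (hiter t ht.le)
  obtain ⟨x₀⟩ := ‹Nonempty X›
  obtain ⟨p, hp⟩ := cauchySeq_tendsto_of_complete (cauchySeq_iterate hmono' hf hiter x₀)
  have hfix : IsFixedPt f p :=
    isFixedPt_of_tendsto_iterate hp (lipschitzWith_one_of_lt_self hlt hf).continuous.continuousAt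
  refine ⟨p, hfix, fun q hq => eq_of_isFixedPt_of_lt_self hlt hf hq hfix, fun y => ?_⟩
  rw [tendsto_iff_dist_tendsto_zero]
  simpa only [iterate_fixed hfix] using tendsto_dist_iterate hmono' hf hiter y p

/-- On a complete metric space, every `φ`-contraction for a comparison
function `φ` has a unique fixed point, and all orbits of iterates converge to it. -/
theorem phi_contraction_fixed_point {X : Type*} [MetricSpace X] [CompleteSpace X]
    [Nonempty X]
    (φ : ℝ → ℝ)
    (hmap : ∀ t : ℝ, 0 ≤ t → 0 ≤ φ t)
    (hmono : ∀ s t : ℝ, 0 ≤ s → s ≤ t → φ s ≤ φ t)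
    (hiter : ∀ t : ℝ, 0 ≤ t → Tendsto (fun p => φ^[p] t) atTop (nhds 0))
    (f : X → X)
    (hf : ∀ x₁ x₂ : X, dist (f x₁) (f x₂) ≤ φ (dist x₁ x₂)) :
    ∃ p : X, f p = p ∧ (∀ q : X, f q = q → q = p) ∧
      ∀ x₀ : X, Tendsto (fun n => f^[n] x₀) atTop (nhds p) :=
  phi_contraction_fixed_point_general φ hmono hiter f hf
end

section
/- Let (X, d) be a complete metric space and let {T_i : X → X}_{i∈ℕ} be a sequence of maps possessing a compact invariant domain C ⊆ X (i.e. T_i(x) ∈ C for every x ∈ C and every i). Suppose the sequence {T_i} converges uniformly on C to a map T : X → X which is a φ-contraction for a comparison function φ with φ(t) < t for all t > 0. Then for every x ∈ C the forward trajectory Φ_k(x) = T_k∘T_{k−1}∘⋯∘T₁(x) converges to the unique fixed point p of T, i.e. d(Φ_k(x), p) → 0 as k → ∞. -/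
open Filter Set Topology

/-- Forward composition: `fwdComp g k = g (k-1) ∘ ⋯ ∘ g 1 ∘ g 0`
(i.e. `g_k ∘ g_{k-1} ∘ ⋯ ∘ g₁` in 1-based notation). -/
def fwdComp {α : Type*} (g : ℕ → α → α) : ℕ → α → α
  | 0 => id
  | k + 1 => fun a => g k (fwdComp g k a)

/-- If a sequence of maps `T i` has a compact invariant domain `C` and
converges uniformly on `C` to a `φ`-contraction `T` (for a comparison function `φ` with
`φ t < t` for `t > 0`), then every forward trajectory starting in `C` converges to the
unique fixed point of `T`. -/
theorem forward_trajectories_convergence {X : Type*} [MetricSpace X] [CompleteSpace X]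
    [Nonempty X]
    (T : ℕ → X → X) (Tlim : X → X)
    (C : Set X) (hCcomp : IsCompact C)
    (hinv : ∀ i, ∀ x ∈ C, T i x ∈ C)
    (hunif : TendstoUniformlyOn (fun i => T i) Tlim atTop C)
    (φ : ℝ → ℝ)
    (hmap : ∀ t : ℝ, 0 ≤ t → 0 ≤ φ t)
    (hmono : ∀ s t : ℝ, 0 ≤ s → s ≤ t → φ s ≤ φ t)
    (hiter : ∀ t : ℝ, 0 ≤ t → Tendsto (fun p => φ^[p] t) atTop (nhds 0))
    (hlt : ∀ t : ℝ, 0 < t → φ t < t)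
    (hcontr : ∀ x y : X, dist (Tlim x) (Tlim y) ≤ φ (dist x y)) :
    ∃ p : X, Tlim p = p ∧ (∀ q : X, Tlim q = q → q = p) ∧
      ∀ x ∈ C, Tendsto (fun k => dist (fwdComp T k x) p) atTop (nhds 0) := by
  -- basic facts about φ
  have hφ0 : φ 0 = 0 := by
    by_contra h
    have h0 : 0 < φ 0 := lt_of_le_of_ne (hmap 0 le_rfl) (Ne.symm h)
    have h1 := hlt _ h0
    have h2 := hmono 0 (φ 0) le_rfl h0.le
    linarith
  have hle : ∀ t : ℝ, 0 ≤ t → φ t ≤ t := by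
    intro t ht
    rcases eq_or_lt_of_le ht with h | h
    · rw [← h, hφ0]
    · exact (hlt t h).le
  have hTd : ∀ a b : X, dist (Tlim a) (Tlim b) ≤ dist a b :=
    fun a b => (hcontr a b).trans (hle _ dist_nonneg)
  have hTiter : ∀ (m : ℕ) (a b : X), dist (Tlim^[m] a) (Tlim^[m] b) ≤ φ^[m] (dist a b) := by
    intro m
    induction m with
    | zero => simp
    | succ m ih =>
      intro a b
      rw [Function.iterate_succ_apply', Function.iterate_succ_apply',
        Function.iterate_succ_apply']
      exact (hcontr _ _).trans (hmono _ _ dist_nonneg (ih a b))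
  -- fixed point existence via Picard iteration
  obtain ⟨x0⟩ := ‹Nonempty X›
  set u : ℕ → X := fun n => Tlim^[n] x0 with hu
  have hud : ∀ n, dist (u n) (u (n + 1)) ≤ φ^[n] (dist x0 (Tlim x0)) := by
    intro n
    have h := hTiter n x0 (Tlim x0)
    have h2 : u (n + 1) = Tlim^[n] (Tlim x0) := Function.iterate_succ_apply Tlim n x0
    rw [h2]
    exact h
  have hud0 : Tendsto (fun n => dist (u n) (u (n + 1))) atTop (nhds 0) :=
    squeeze_zero (fun n => dist_nonneg) hud (hiter _ dist_nonneg)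
  have hcauchy : CauchySeq u := by
    rw [Metric.cauchySeq_iff]
    intro ε hε
    have hε3 : (0:ℝ) < ε / 3 := by linarith
    have hδ : 0 < ε / 3 - φ (ε / 3) := by have := hlt (ε / 3) hε3; linarith
    obtain ⟨N, hN⟩ := Metric.tendsto_atTop.mp hud0 (ε / 3 - φ (ε / 3)) hδ
    have hN' : ∀ n, N ≤ n → dist (u n) (u (n + 1)) < ε / 3 - φ (ε / 3) := by
      intro n hn
      have := hN n hn
      rwa [Real.dist_eq, sub_zero, abs_of_nonneg dist_nonneg] at this
    have key : ∀ n, N ≤ n → dist (u n) (u N) ≤ ε / 3 := by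
      intro n hn
      induction n, hn using Nat.le_induction with
      | base => rw [dist_self]; linarith
      | succ n hn ih =>
        have h1 : dist (u (n + 1)) (u (N + 1)) ≤ φ (dist (u n) (u N)) := by
          have : dist (Tlim (u n)) (Tlim (u N)) ≤ φ (dist (u n) (u N)) := hcontr _ _
          simpa [hu, ← Function.iterate_succ_apply'] using this
        have h2 : φ (dist (u n) (u N)) ≤ φ (ε / 3) := hmono _ _ dist_nonneg ih
        have h3 : dist (u (N + 1)) (u N) < ε / 3 - φ (ε / 3) := by
          rw [dist_comm]; exact hN' N le_rfl
        calc dist (u (n + 1)) (u N) ≤ dist (u (n + 1)) (u (N + 1)) + dist (u (N + 1)) (u N) :=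
              dist_triangle _ _ _
          _ ≤ ε / 3 := by linarith
    refine ⟨N, fun m hm n hn => ?_⟩
    calc dist (u m) (u n) ≤ dist (u m) (u N) + dist (u N) (u n) := dist_triangle _ _ _
      _ ≤ ε / 3 + ε / 3 := add_le_add (key m hm) (by rw [dist_comm]; exact key n hn)
      _ < ε := by linarith
  obtain ⟨p, hp⟩ := cauchySeq_tendsto_of_complete hcauchy
  have hTcont : Continuous Tlim := by
    have : LipschitzWith 1 Tlim := by
      intro a b
      rw [edist_dist, edist_dist]
      simpa using ENNReal.ofReal_le_ofReal (hTd a b)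
    exact this.continuous
  have hfix : Tlim p = p := by
    have h1 : Tendsto (fun n => Tlim (u n)) atTop (nhds (Tlim p)) :=
      (hTcont.tendsto p).comp hp
    have h2 : Tendsto (fun n => Tlim (u n)) atTop (nhds p) := by
      have h3 := hp.comp (tendsto_add_atTop_nat 1)
      have h4 : (fun n => Tlim (u n)) = fun n => u (n + 1) := by
        funext n
        exact (Function.iterate_succ_apply' Tlim n x0).symm
      rw [h4]
      exact h3
    exact tendsto_nhds_unique h1 h2
  have huniq : ∀ q : X, Tlim q = q → q = p := by
    intro q hq
    by_contra h
    have hd : 0 < dist q p := dist_pos.mpr h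
    have h1 : dist q p ≤ φ (dist q p) := by
      have := hcontr q p
      rwa [hq, hfix] at this
    have := hlt _ hd
    linarith
  refine ⟨p, hfix, huniq, ?_⟩
  intro x hx
  set xs : ℕ → X := fun k => fwdComp T k x with hxs
  have hxsC : ∀ k, xs k ∈ C := by
    intro k
    induction k with
    | zero => simpa [hxs, fwdComp] using hx
    | succ k ih => exact hinv k _ ih
  set e : ℕ → ℝ := fun i => dist (T i (xs i)) (Tlim (xs i)) with he
  have hunif' := Metric.tendstoUniformlyOn_iff.mp hunif
  have he0 : Tendsto e atTop (nhds 0) := by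
    rw [Metric.tendsto_atTop]
    intro ε hε
    obtain ⟨N, hN⟩ := eventually_atTop.mp (hunif' ε hε)
    refine ⟨N, fun n hn => ?_⟩
    have h := hN n hn (xs n) (hxsC n)
    rw [dist_comm] at h
    have h2 : e n < ε := h
    have hpos : (0:ℝ) ≤ e n := dist_nonneg
    rw [Real.dist_eq, sub_zero, abs_of_nonneg hpos]
    exact h2
  have hstep : ∀ (k : ℕ) (w : X), dist (xs (k + 1)) (Tlim w) ≤ e k + φ (dist (xs k) w) := by
    intro k w
    have h1 : xs (k + 1) = T k (xs k) := rfl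
    calc dist (xs (k + 1)) (Tlim w)
        ≤ dist (xs (k + 1)) (Tlim (xs k)) + dist (Tlim (xs k)) (Tlim w) := dist_triangle _ _ _
      _ ≤ e k + φ (dist (xs k) w) := add_le_add (by rw [h1]) (hcontr _ _)
  have hB : ∀ (m k : ℕ) (w : X),
      dist (xs (k + m)) (Tlim^[m] w) ≤ (∑ i ∈ Finset.range m, e (k + i)) + dist (xs k) w := by
    intro m
    induction m with
    | zero => simp
    | succ m ih =>
      intro k w
      have h1 : dist (xs (k + (m + 1))) (Tlim^[m + 1] w)
          ≤ e (k + m) + φ (dist (xs (k + m)) (Tlim^[m] w)) := by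
        have h := hstep (k + m) (Tlim^[m] w)
        rw [Function.iterate_succ_apply', ← add_assoc]
        exact h
      have h2 : φ (dist (xs (k + m)) (Tlim^[m] w)) ≤ dist (xs (k + m)) (Tlim^[m] w) :=
        hle _ dist_nonneg
      have h3 := ih k w
      rw [Finset.sum_range_succ]
      linarith
  have hentry : ∀ ε : ℝ, 0 < ε → ∀ N : ℕ, ∃ k, N ≤ k ∧ dist (xs k) p < ε := by
    intro ε hε N
    obtain ⟨z, hzC, σ, hσmono, hσtend⟩ := hCcomp.tendsto_subseq (fun j => hxsC (N + j))
    obtain ⟨m, hm⟩ := (Metric.tendsto_atTop.mp (hiter (dist z p) dist_nonneg) (ε / 2)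
      (by linarith)).imp (fun m h => h m le_rfl)
    have hm' : φ^[m] (dist z p) < ε / 2 := by
      rwa [Real.dist_eq, sub_zero, abs_of_nonneg (by
        clear hm
        induction m with
        | zero => simpa using dist_nonneg
        | succ m ih => rw [Function.iterate_succ_apply']; exact hmap _ ih)] at hm
    -- the sum of errors plus the distance to z tends to 0 along the subsequence
    have hS : Tendsto (fun j => (∑ i ∈ Finset.range m, e (N + σ j + i)) +
        dist (xs (N + σ j)) z) atTop (nhds 0) := by
      have hsum : Tendsto (fun j => ∑ i ∈ Finset.range m, e (N + σ j + i)) atTop (nhds 0) := by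
        have : Tendsto (fun j => ∑ i ∈ Finset.range m, e (N + σ j + i)) atTop
            (nhds (∑ _i ∈ Finset.range m, (0:ℝ))) := by
          refine tendsto_finset_sum _ (fun i _ => ?_)
          refine he0.comp (tendsto_atTop_mono (fun j => ?_) tendsto_id)
          have h : j ≤ σ j := hσmono.le_apply
          simp only [id_eq]
          omega
        simpa using this
      have hdz : Tendsto (fun j => dist (xs (N + σ j)) z) atTop (nhds 0) := by
        have : Tendsto (fun j => xs (N + σ j)) atTop (nhds z) := hσtend
        exact tendsto_iff_dist_tendsto_zero.mp this
      simpa using hsum.add hdz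
    obtain ⟨j, hj⟩ := (Metric.tendsto_atTop.mp hS (ε / 2 - φ^[m] (dist z p))
      (by linarith)).imp (fun j h => h j le_rfl)
    refine ⟨N + σ j + m, by omega, ?_⟩
    have hSj : (∑ i ∈ Finset.range m, e (N + σ j + i)) + dist (xs (N + σ j)) z
        < ε / 2 - φ^[m] (dist z p) := by
      have h := hj
      rw [Real.dist_eq, sub_zero] at h
      calc (∑ i ∈ Finset.range m, e (N + σ j + i)) + dist (xs (N + σ j)) z
          ≤ |(∑ i ∈ Finset.range m, e (N + σ j + i)) + dist (xs (N + σ j)) z| := le_abs_self _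
        _ < _ := h
    have hfixm : Tlim^[m] p = p := Function.iterate_fixed hfix m
    calc dist (xs (N + σ j + m)) p
        ≤ dist (xs (N + σ j + m)) (Tlim^[m] z) + dist (Tlim^[m] z) p := dist_triangle _ _ _
      _ ≤ ((∑ i ∈ Finset.range m, e (N + σ j + i)) + dist (xs (N + σ j)) z)
          + φ^[m] (dist z p) := by
          refine add_le_add (hB m (N + σ j) z) ?_
          have := hTiter m z p
          rwa [hfixm] at this
      _ < ε := by linarith
  rw [Metric.tendsto_atTop]
  intro ε hε
  have hε2 : (0:ℝ) < ε / 2 := by linarith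
  have hδ : 0 < ε / 2 - φ (ε / 2) := by have := hlt (ε / 2) hε2; linarith
  obtain ⟨N, hN⟩ := eventually_atTop.mp (hunif' (ε / 2 - φ (ε / 2)) hδ)
  obtain ⟨k0, hk0N, hk0⟩ := hentry (ε / 2) hε2 N
  refine ⟨k0, fun k hk => ?_⟩
  have key : ∀ k, k0 ≤ k → dist (xs k) p ≤ ε / 2 := by
    intro k hk
    induction k, hk using Nat.le_induction with
    | base => exact hk0.le
    | succ k hk ih =>
      have h1 : dist (xs (k + 1)) p ≤ e k + φ (dist (xs k) p) := by
        have := hstep k p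
        rwa [hfix] at this
      have h2 : e k < ε / 2 - φ (ε / 2) := by
        have h := hN k (le_trans hk0N hk) (xs k) (hxsC k)
        rw [dist_comm] at h
        exact h
      have h3 : φ (dist (xs k) p) ≤ φ (ε / 2) := hmono _ _ dist_nonneg ih
      linarith
  have := key k hk
  rw [Real.dist_eq, sub_zero, abs_of_nonneg dist_nonneg]
  calc dist (xs k) p ≤ ε / 2 := this
    _ < ε := by linarith
end

section
/- Let (X, d) be a metric space, let φ : [0,∞) → [0,∞) be a non-decreasing function, and let (f_i)_{i≥1} be a countable family of maps f_i : X → X each satisfying d(f_i(x), f_i(y)) ≤ φ(d(x,y)) for all x, y ∈ X. Define the set operator F on the space H(X) of nonempty compact subsets of X by F(A) = closure(⋃_{i=1}^∞ f_i(A)), and suppose F maps H(X) into H(X). Then h_d(F(A), F(B)) ≤ φ(h_d(A,B)) for all A, B ∈ H(X); that is, the countable-IFS operator F is φ-contractive with respect to the Hausdorff metric. -/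
open Set Metric

section HausdorffDist

variable {X Y ι : Type*} [PseudoMetricSpace X] [PseudoMetricSpace Y]

theorem exists_mem_dist_le_hausdorffDist {A B : Set X} (hA : Bornology.IsBounded A)
    (hB : IsCompact B) (hBne : B.Nonempty) {a : X} (ha : a ∈ A) :
    ∃ b ∈ B, dist a b ≤ hausdorffDist A B := by
  obtain ⟨b, hb, hab⟩ := hB.exists_infDist_eq_dist hBne a
  have hfin : hausdorffEDist A B ≠ ⊤ :=
    hausdorffEDist_ne_top_of_nonempty_of_bounded ⟨a, ha⟩ hBne hA hB.isBounded
  exact ⟨b, hb, hab ▸ infDist_le_hausdorffDist_of_mem ha hfin⟩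

theorem exists_mem_iUnion_image_dist_le {f : ι → X → Y} {φ : ℝ → ℝ}
    (hφ : MonotoneOn φ (Ici 0)) (hf : ∀ i x y, dist (f i x) (f i y) ≤ φ (dist x y))
    {A B : Set X} (hA : Bornology.IsBounded A) (hB : IsCompact B) (hBne : B.Nonempty)
    {y : Y} (hy : y ∈ ⋃ i, f i '' A) :
    ∃ z ∈ ⋃ i, f i '' B, dist y z ≤ φ (hausdorffDist A B) := by
  obtain ⟨i, a, ha, rfl⟩ : ∃ i, ∃ a ∈ A, f i a = y := by simpa using hy
  obtain ⟨b, hb, hab⟩ := exists_mem_dist_le_hausdorffDist hA hB hBne ha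
  refine ⟨f i b, mem_iUnion_of_mem i (mem_image_of_mem _ hb), ?_⟩
  calc dist (f i a) (f i b) ≤ φ (dist a b) := hf i a b
    _ ≤ φ (hausdorffDist A B) :=
      hφ (mem_Ici.2 dist_nonneg) (mem_Ici.2 hausdorffDist_nonneg) hab

theorem hausdorffDist_iUnion_image_le {f : ι → X → Y} {φ : ℝ → ℝ}
    (hφ : MonotoneOn φ (Ici 0)) (hf : ∀ i x y, dist (f i x) (f i y) ≤ φ (dist x y))
    {A B : Set X} (hA : IsCompact A) (hB : IsCompact B) (hAne : A.Nonempty)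
    (hBne : B.Nonempty) (hφ₀ : 0 ≤ φ (hausdorffDist A B)) :
    hausdorffDist (⋃ i, f i '' A) (⋃ i, f i '' B) ≤ φ (hausdorffDist A B) := by
  refine hausdorffDist_le_of_mem_dist hφ₀
    (fun _ hy ↦ exists_mem_iUnion_image_dist_le hφ hf hA.isBounded hB hBne hy)
    (fun _ hy ↦ ?_)
  rw [hausdorffDist_comm]
  exact exists_mem_iUnion_image_dist_le hφ hf hB.isBounded hA hAne hy

end HausdorffDist

theorem countable_IFS_operator_phi_contractive_general {X : Type*} [MetricSpace X]
    (φ : ℝ → ℝ)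
    (hmap : ∀ t : ℝ, 0 ≤ t → 0 ≤ φ t)
    (hmono : ∀ s t : ℝ, 0 ≤ s → s ≤ t → φ s ≤ φ t)
    (f : ℕ → X → X)
    (hf : ∀ i, ∀ x y : X, dist (f i x) (f i y) ≤ φ (dist x y))
    (F : Set X → Set X)
    (hF : ∀ A : Set X, F A = closure (⋃ i, f i '' A)) :
    ∀ A B : Set X, A.Nonempty → B.Nonempty → IsCompact A → IsCompact B →
      Metric.hausdorffDist (F A) (F B) ≤ φ (Metric.hausdorffDist A B) := by
  intro A B hAne hBne hA hB
  rw [hF A, hF B, hausdorffDist_closure]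
  exact hausdorffDist_iUnion_image_le (fun s hs _ _ hst ↦ hmono s _ hs hst) hf hA hB hAne hBne
    (hmap _ hausdorffDist_nonneg)

/-- For a countable family of maps `f i`, each `φ`-contractive for a
non-decreasing `φ : [0,∞) → [0,∞)`, the countable-IFS operator
`F(A) = closure (⋃ i, f i '' A)`, assumed to map nonempty compact sets to compact sets,
satisfies `h_d(F(A), F(B)) ≤ φ(h_d(A,B))` for all nonempty compact `A, B`. -/
theorem countable_IFS_operator_phi_contractive {X : Type*} [MetricSpace X]
    (φ : ℝ → ℝ)
    (hmap : ∀ t : ℝ, 0 ≤ t → 0 ≤ φ t)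
    (hmono : ∀ s t : ℝ, 0 ≤ s → s ≤ t → φ s ≤ φ t)
    (f : ℕ → X → X)
    (hf : ∀ i, ∀ x y : X, dist (f i x) (f i y) ≤ φ (dist x y))
    (F : Set X → Set X)
    (hF : ∀ A : Set X, F A = closure (⋃ i, f i '' A))
    (hFH : ∀ A : Set X, A.Nonempty → IsCompact A → IsCompact (F A)) :
    ∀ A B : Set X, A.Nonempty → B.Nonempty → IsCompact A → IsCompact B →
      Metric.hausdorffDist (F A) (F B) ≤ φ (Metric.hausdorffDist A B) :=
  countable_IFS_operator_phi_contractive_general φ hmap hmono f hf F hF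
end

section
/- Let (X, d) be a complete metric space and for each i ∈ ℕ let F_i = {X; f_{1,i}, …, f_{n,i}} be a function system of n maps, each f_{r,i} a φ_{r,i}-contraction for a comparison function φ_{r,i}. Suppose there is a compact set C ⊆ X invariant for all the maps f_{r,i} (i.e. f_{r,i}(x) ∈ C for x ∈ C), and that for each r = 1, …, n the sequence (f_{r,i})_{i∈ℕ} converges uniformly on C to a map f_r as i → ∞. Let F(A) = ⋃_{r=1}^n f_r(A) be the induced set map and assume F is a φ-contraction on (H(X), h) for a comparison function φ with φ(t) < t for t > 0. Then for every nonempty compact P ⊆ C, the forward SFS trajectories Φ_k(P) = F_k∘F_{k−1}∘⋯∘F₁(P) converge in the Hausdorff metric to the unique attractor of F. -/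
/-!
Each `f_{r,i}` is nonexpansive, so the limit maps are continuous on `C` and the set maps `F_i`
and `F` act on the compact space `H(C)` of nonempty compact subsets of `C`, where `F_i → F`
uniformly. In a compact metric space, a sequence `Q` with `dist (Q (k+1)) (F (Q k)) → 0`
converges to a fixed point of the `φ`-contraction `F`: every cluster point of `Q` is the image
under `F` of another cluster point, so any two cluster points are at distance at most
`φ^[m] (diam H(C))` for every `m`. The orbits of `F` and the trajectories `Φ_k(P)` are such
sequences, and a `φ`-contraction has at most one fixed point.
-/

open Filter Set Topology

open Metric TopologicalSpace

structure IsComparisonFunction (φ : ℝ → ℝ) : Prop where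
  mono : ∀ s t : ℝ, 0 ≤ s → s ≤ t → φ s ≤ φ t
  tendsto_iterate : ∀ t : ℝ, 0 ≤ t → Tendsto (fun p => φ^[p] t) atTop (𝓝 0)

namespace IsComparisonFunction

variable {φ : ℝ → ℝ}

theorem lt_self (hφ : IsComparisonFunction φ) {t : ℝ} (ht : 0 < t) : φ t < t := by
  by_contra! h
  have hge : ∀ p, t ≤ φ^[p] t := by
    intro p
    induction p with
    | zero => rfl
    | succ p ih =>
      rw [Function.iterate_succ_apply']
      exact h.trans (hφ.mono t _ ht.le ih)
  exact ht.not_ge (ge_of_tendsto' (hφ.tendsto_iterate t ht.le) hge)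

theorem le_self (hφ : IsComparisonFunction φ) {t : ℝ} (ht : 0 ≤ t) : φ t ≤ t := by
  rcases ht.lt_or_eq with ht | rfl
  · exact (hφ.lt_self ht).le
  · by_contra! h
    exact (hφ.lt_self h).not_ge (hφ.mono 0 _ le_rfl h.le)

theorem eq_zero_of_le_apply (hφ : IsComparisonFunction φ) {t : ℝ} (ht : 0 ≤ t) (h : t ≤ φ t) :
    t = 0 := by
  by_contra h0
  exact (h.trans_lt (hφ.lt_self (ht.lt_of_ne' h0))).false

theorem lipschitzWith_one (hφ : IsComparisonFunction φ) {Y Z : Type*} [PseudoMetricSpace Y]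
    [PseudoMetricSpace Z] {T : Y → Z} (hT : ∀ x y, dist (T x) (T y) ≤ φ (dist x y)) :
    LipschitzWith 1 T :=
  LipschitzWith.of_dist_le_mul fun x y => by
    simpa using (hT x y).trans (hφ.le_self dist_nonneg)

end IsComparisonFunction

section PerturbedOrbit

variable {Y : Type*} [MetricSpace Y] {T : Y → Y} {φ : ℝ → ℝ} {Q : ℕ → Y}

theorem tendsto_apply_succ_comp (hT : Continuous T)
    (hQ : Tendsto (fun k => dist (Q (k + 1)) (T (Q k))) atTop (𝓝 0))
    {n : ℕ → ℕ} (hn : Tendsto n atTop atTop) {y : Y} (hy : Tendsto (Q ∘ n) atTop (𝓝 y)) :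
    Tendsto (fun k => Q (n k + 1)) atTop (𝓝 (T y)) :=
  ((hT.tendsto y).comp hy).congr_dist <| (hQ.comp hn).congr fun _ => dist_comm _ _

theorem exists_mapClusterPt_apply_eq [CompactSpace Y] (hT : Continuous T)
    (hQ : Tendsto (fun k => dist (Q (k + 1)) (T (Q k))) atTop (𝓝 0))
    {x : Y} (hx : MapClusterPt x atTop Q) :
    ∃ y, MapClusterPt y atTop Q ∧ T y = x := by
  have hx_succ : MapClusterPt x atTop (fun k => Q (k + 1)) :=
    mapClusterPt_comp.2 (by rwa [map_add_atTop_eq_nat])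
  obtain ⟨ψ, hψ, hQψ⟩ := hx_succ.tendsto_subseq
  obtain ⟨y, χ, hχ, hQψχ⟩ := CompactSpace.tendsto_subseq (Q ∘ ψ)
  have hψχ : Tendsto (ψ ∘ χ) atTop atTop := (hψ.comp hχ).tendsto_atTop
  refine ⟨y, hQψχ.mapClusterPt.of_comp hψχ, tendsto_nhds_unique ?_ (hQψ.comp hχ.tendsto_atTop)⟩
  exact tendsto_apply_succ_comp hT hQ hψχ hQψχ

theorem dist_le_iterate_of_mapClusterPt [CompactSpace Y] (hφ : IsComparisonFunction φ)
    (hT : ∀ x y, dist (T x) (T y) ≤ φ (dist x y))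
    (hQ : Tendsto (fun k => dist (Q (k + 1)) (T (Q k))) atTop (𝓝 0)) (m : ℕ) {x y : Y}
    (hx : MapClusterPt x atTop Q) (hy : MapClusterPt y atTop Q) :
    dist x y ≤ φ^[m] (diam (univ : Set Y)) := by
  induction m generalizing x y with
  | zero => exact dist_le_diam_of_mem isCompact_univ.isBounded trivial trivial
  | succ m ih =>
    have hTc := (hφ.lipschitzWith_one hT).continuous
    obtain ⟨x', hx', rfl⟩ := exists_mapClusterPt_apply_eq hTc hQ hx
    obtain ⟨y', hy', rfl⟩ := exists_mapClusterPt_apply_eq hTc hQ hy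
    rw [Function.iterate_succ_apply']
    exact (hT x' y').trans (hφ.mono _ _ dist_nonneg (ih hx' hy'))

theorem exists_isFixedPt_tendsto [CompactSpace Y] (hφ : IsComparisonFunction φ)
    (hT : ∀ x y, dist (T x) (T y) ≤ φ (dist x y))
    (hQ : Tendsto (fun k => dist (Q (k + 1)) (T (Q k))) atTop (𝓝 0)) :
    ∃ a, Function.IsFixedPt T a ∧ Tendsto Q atTop (𝓝 a) := by
  obtain ⟨a, -, ha⟩ := isCompact_univ.exists_mapClusterPt (f := atTop) (u := Q) (by simp)
  have hunique : ∀ x, MapClusterPt x atTop Q → x = a := fun x hx =>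
    dist_le_zero.1 <| ge_of_tendsto' (hφ.tendsto_iterate _ diam_nonneg)
      fun m => dist_le_iterate_of_mapClusterPt hφ hT hQ m hx ha
  have hQa : Tendsto Q atTop (𝓝 a) := tendsto_nhds_of_unique_mapClusterPt hunique
  refine ⟨a, tendsto_nhds_unique ?_ (hQa.comp (tendsto_add_atTop_nat 1)), hQa⟩
  exact tendsto_apply_succ_comp (hφ.lipschitzWith_one hT).continuous hQ tendsto_id hQa

theorem IsComparisonFunction.eq_of_isFixedPt (hφ : IsComparisonFunction φ)
    (hT : ∀ x y, dist (T x) (T y) ≤ φ (dist x y)) {a b : Y} (ha : Function.IsFixedPt T a)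
    (hb : Function.IsFixedPt T b) : a = b :=
  dist_eq_zero.1 <| hφ.eq_zero_of_le_apply dist_nonneg <| by
    simpa only [ha.eq, hb.eq] using hT a b

theorem exists_isFixedPt_forall_tendsto_fwdComp [CompactSpace Y] [Nonempty Y]
    (hφ : IsComparisonFunction φ) (hT : ∀ x y, dist (T x) (T y) ≤ φ (dist x y))
    {Ti : ℕ → Y → Y} (hTi : TendstoUniformly Ti T atTop) :
    ∃ a, Function.IsFixedPt T a ∧ ∀ y, Tendsto (fun k => fwdComp Ti k y) atTop (𝓝 a) := by
  obtain ⟨a, ha, -⟩ := exists_isFixedPt_tendsto hφ hT (Q := fun k => T^[k] (Classical.arbitrary Y))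
    (by simp [Function.iterate_succ_apply'])
  refine ⟨a, ha, fun y => ?_⟩
  have hstep : Tendsto (fun k => dist (fwdComp Ti (k + 1) y) (T (fwdComp Ti k y))) atTop (𝓝 0) :=
    Metric.tendsto_nhds.2 fun ε hε => (Metric.tendstoUniformly_iff.1 hTi ε hε).mono fun k hk => by
      simpa only [fwdComp, Real.dist_0_eq_abs, abs_dist, dist_comm] using hk (fwdComp Ti k y)
  obtain ⟨b, hb, hyb⟩ := exists_isFixedPt_tendsto hφ hT (Q := fun k => fwdComp Ti k y) hstep
  rwa [hφ.eq_of_isFixedPt hT hb ha] at hyb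

end PerturbedOrbit

section Hutchinson

variable {X : Type*} [MetricSpace X]

abbrev NonemptyCompactsIn (C : Set X) := {K : NonemptyCompacts X // (K : Set X) ⊆ C}

theorem NonemptyCompactsIn.compactSpace {C : Set X} (hC : IsCompact C) :
    CompactSpace (NonemptyCompactsIn C) := by
  have := isCompact_iff_compactSpace.mp hC
  refine (isCompact_iff_compactSpace (s := {K : NonemptyCompacts X | (K : Set X) ⊆ C})).mp ?_
  simpa [NonemptyCompacts.range_map (IsInducing.subtypeVal (t := C))] using
    isCompact_range (continuous_subtype_val (p := (· ∈ C))).nonemptyCompacts_map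

def hutchinsonOn {ι : Type*} [Nonempty ι] [Finite ι] (C : Set X) (g : ι → X → X)
    (hg : ∀ r, ContinuousOn (g r) C) (hgC : ∀ r, MapsTo (g r) C C) (K : NonemptyCompactsIn C) :
    NonemptyCompactsIn C :=
  ⟨⟨⟨⋃ r, g r '' K.1, isCompact_iUnion fun r => K.1.isCompact.image_of_continuousOn
      ((hg r).mono K.2)⟩, nonempty_iUnion.2 ⟨Classical.arbitrary ι, K.1.nonempty.image _⟩⟩,
    iUnion_subset fun r => ((hgC r).mono_left K.2).image_subset⟩

@[simp]
theorem coe_hutchinsonOn {ι : Type*} [Nonempty ι] [Finite ι] {C : Set X} {g : ι → X → X}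
    (hg : ∀ r, ContinuousOn (g r) C) (hgC : ∀ r, MapsTo (g r) C C) (K : NonemptyCompactsIn C) :
    ((hutchinsonOn C g hg hgC K).1 : Set X) = ⋃ r, g r '' K.1 :=
  rfl

theorem coe_fwdComp_hutchinsonOn {ι : Type*} [Nonempty ι] [Finite ι] {C : Set X}
    {g : ℕ → ι → X → X} (hg : ∀ i r, ContinuousOn (g i r) C) (hgC : ∀ i r, MapsTo (g i r) C C)
    (K : NonemptyCompactsIn C) (k : ℕ) :
    ((fwdComp (fun i => hutchinsonOn C (g i) (hg i) (hgC i)) k K).1 : Set X) =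
      fwdComp (fun i A => ⋃ r, g i r '' A) k K.1 := by
  induction k with
  | zero => rfl
  | succ k ih => simp only [fwdComp, coe_hutchinsonOn, ih]

theorem IsComparisonFunction.set_eq_of_isFixedPt {φ : ℝ → ℝ} (hφ : IsComparisonFunction φ)
    {F : Set X → Set X} (hF : ∀ A B : Set X, A.Nonempty → IsCompact A → B.Nonempty →
      IsCompact B → hausdorffDist (F A) (F B) ≤ φ (hausdorffDist A B))
    {A B : Set X} (hA : A.Nonempty) (hAc : IsCompact A) (hB : B.Nonempty) (hBc : IsCompact B)
    (hFA : F A = A) (hFB : F B = B) : A = B := by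
  have hAB : hausdorffDist A B = 0 := hφ.eq_zero_of_le_apply hausdorffDist_nonneg <| by
    simpa only [hFA, hFB] using hF A B hA hAc hB hBc
  exact congrArg SetLike.coe
    (dist_eq_zero.1 hAB : (⟨⟨A, hAc⟩, hA⟩ : NonemptyCompacts X) = ⟨⟨B, hBc⟩, hB⟩)

theorem hausdorffDist_iUnion_image_le_s13 {ι : Type*} {g g' : ι → X → X} {A : Set X} {δ : ℝ}
    (hδ : 0 ≤ δ) (h : ∀ r, ∀ x ∈ A, dist (g r x) (g' r x) ≤ δ) :
    hausdorffDist (⋃ r, g r '' A) (⋃ r, g' r '' A) ≤ δ := by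
  apply hausdorffDist_le_of_mem_dist hδ
  · simp only [mem_iUnion, mem_image]
    rintro _ ⟨r, x, hx, rfl⟩
    exact ⟨g' r x, ⟨r, x, hx, rfl⟩, h r x hx⟩
  · simp only [mem_iUnion, mem_image]
    rintro _ ⟨r, x, hx, rfl⟩
    exact ⟨g r x, ⟨r, x, hx, rfl⟩, dist_comm (g r x) _ ▸ h r x hx⟩

theorem tendstoUniformly_hutchinsonOn {ι : Type*} [Nonempty ι] [Finite ι] {C : Set X}
    {g : ℕ → ι → X → X} {glim : ι → X → X} (hg : ∀ i r, ContinuousOn (g i r) C)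
    (hgC : ∀ i r, MapsTo (g i r) C C) (hglim : ∀ r, ContinuousOn (glim r) C)
    (hglimC : ∀ r, MapsTo (glim r) C C)
    (hunif : ∀ r, TendstoUniformlyOn (fun i => g i r) (glim r) atTop C) :
    TendstoUniformly (fun i => hutchinsonOn C (g i) (hg i) (hgC i))
      (hutchinsonOn C glim hglim hglimC) atTop := by
  rw [Metric.tendstoUniformly_iff]
  intro ε hε
  filter_upwards [eventually_all.2 fun r =>
    Metric.tendstoUniformlyOn_iff.1 (hunif r) (ε / 2) (half_pos hε)] with i hi K
  exact (hausdorffDist_iUnion_image_le_s13 (half_pos hε).le fun r x hx =>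
    (hi r x (K.2 hx)).le).trans_lt (half_lt_self hε)

end Hutchinson

theorem forward_SFS_trajectories_convergence_general {X : Type*} [MetricSpace X]
    (n : ℕ) (hn : 0 < n)
    (f : ℕ → Fin n → X → X) (flim : Fin n → X → X)
    (φseq : ℕ → Fin n → ℝ → ℝ)
    (hmonoseq : ∀ i r, ∀ s t : ℝ, 0 ≤ s → s ≤ t → φseq i r s ≤ φseq i r t)
    (hiterseq : ∀ i r, ∀ t : ℝ, 0 ≤ t →
      Tendsto (fun p => (φseq i r)^[p] t) atTop (nhds 0))
    (hcontrseq : ∀ i r, ∀ x y : X, dist (f i r x) (f i r y) ≤ φseq i r (dist x y))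
    (C : Set X) (hCne : C.Nonempty) (hCcomp : IsCompact C)
    (hinv : ∀ i r, ∀ x ∈ C, f i r x ∈ C)
    (hunif : ∀ r, TendstoUniformlyOn (fun i => f i r) (flim r) atTop C)
    (F : Set X → Set X) (hFdef : ∀ A, F A = ⋃ r : Fin n, flim r '' A)
    (Fi : ℕ → Set X → Set X) (hFi : ∀ i A, Fi i A = ⋃ r : Fin n, f i r '' A)
    (φ : ℝ → ℝ)
    (hmono : ∀ s t : ℝ, 0 ≤ s → s ≤ t → φ s ≤ φ t)
    (hiter : ∀ t : ℝ, 0 ≤ t → Tendsto (fun p => φ^[p] t) atTop (nhds 0))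
    (hFcontr : ∀ A B : Set X, A.Nonempty → IsCompact A → B.Nonempty → IsCompact B →
      Metric.hausdorffDist (F A) (F B) ≤ φ (Metric.hausdorffDist A B)) :
    ∃ Astar : Set X, Astar.Nonempty ∧ IsCompact Astar ∧ F Astar = Astar ∧
      (∀ B : Set X, B.Nonempty → IsCompact B → F B = B → B = Astar) ∧
      ∀ P : Set X, P.Nonempty → IsCompact P → P ⊆ C →
        Tendsto (fun k => Metric.hausdorffDist (fwdComp Fi k P) Astar)
          atTop (nhds 0) := by
  obtain rfl : F = fun A => ⋃ r, flim r '' A := funext hFdef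
  obtain rfl : Fi = fun i A => ⋃ r, f i r '' A := funext fun i => funext (hFi i)
  have hφ : IsComparisonFunction φ := ⟨hmono, hiter⟩
  have hf_cont i r : ContinuousOn (f i r) C :=
    (IsComparisonFunction.lipschitzWith_one ⟨hmonoseq i r, hiterseq i r⟩
      (hcontrseq i r)).continuous.continuousOn
  have hflim_cont r : ContinuousOn (flim r) C :=
    (hunif r).continuousOn (.of_forall fun i => hf_cont i r)
  have hflim_maps r : MapsTo (flim r) C C := fun x hx =>
    hCcomp.isClosed.mem_of_tendsto ((hunif r).tendsto_at hx) (.of_forall fun i => hinv i r x hx)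
  have : Nonempty (Fin n) := ⟨⟨0, hn⟩⟩
  have := NonemptyCompactsIn.compactSpace hCcomp
  have : Nonempty (NonemptyCompactsIn C) := ⟨⟨⟨⟨C, hCcomp⟩, hCne⟩, subset_rfl⟩⟩
  let T := hutchinsonOn C flim hflim_cont hflim_maps
  have hT_contr K L : dist (T K) (T L) ≤ φ (dist K L) :=
    hFcontr _ _ K.1.nonempty K.1.isCompact L.1.nonempty L.1.isCompact
  obtain ⟨A, hA, hconv⟩ := exists_isFixedPt_forall_tendsto_fwdComp hφ hT_contr
    (tendstoUniformly_hutchinsonOn hf_cont hinv hflim_cont hflim_maps hunif)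
  have hFA : ⋃ r, flim r '' A.1 = A.1 := congrArg (fun K : NonemptyCompactsIn C => (K.1 : Set X)) hA
  refine ⟨A.1, A.1.nonempty, A.1.isCompact, hFA, fun B hBne hBc hFB =>
    hφ.set_eq_of_isFixedPt hFcontr hBne hBc A.1.nonempty A.1.isCompact hFB hFA,
    fun P hPne hPc hPC => ?_⟩
  refine (tendsto_iff_dist_tendsto_zero.mp (hconv ⟨⟨⟨P, hPc⟩, hPne⟩, hPC⟩)).congr fun k => ?_
  rw [Subtype.dist_eq, NonemptyCompacts.dist_eq, coe_fwdComp_hutchinsonOn hf_cont hinv]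
  rfl

/-- **convergence of forward SFS trajectories.** Each function system
`F i` consists of `n` maps `f i r`, each a `φseq i r`-contraction for comparison
functions `φseq i r`; there is a nonempty compact set `C` invariant for all the maps,
and for each `r` the sequence `(f i r)_i` converges uniformly on `C` to `flim r`. If the
induced set map `F(A) = ⋃ r, flim r '' A` is a `φ`-contraction for the Hausdorff metric,
for a comparison function `φ` with `φ t < t` for `t > 0`, then the forward SFS
trajectories of every nonempty compact `P ⊆ C` converge in the Hausdorff metric to the
unique attractor of `F`. -/
theorem forward_SFS_trajectories_convergence {X : Type*} [MetricSpace X] [CompleteSpace X]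
    (n : ℕ) (hn : 0 < n)
    (f : ℕ → Fin n → X → X) (flim : Fin n → X → X)
    (φseq : ℕ → Fin n → ℝ → ℝ)
    (hmapseq : ∀ i r, ∀ t : ℝ, 0 ≤ t → 0 ≤ φseq i r t)
    (hmonoseq : ∀ i r, ∀ s t : ℝ, 0 ≤ s → s ≤ t → φseq i r s ≤ φseq i r t)
    (hiterseq : ∀ i r, ∀ t : ℝ, 0 ≤ t →
      Tendsto (fun p => (φseq i r)^[p] t) atTop (nhds 0))
    (hcontrseq : ∀ i r, ∀ x y : X, dist (f i r x) (f i r y) ≤ φseq i r (dist x y))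
    (C : Set X) (hCne : C.Nonempty) (hCcomp : IsCompact C)
    (hinv : ∀ i r, ∀ x ∈ C, f i r x ∈ C)
    (hunif : ∀ r, TendstoUniformlyOn (fun i => f i r) (flim r) atTop C)
    (F : Set X → Set X) (hFdef : ∀ A, F A = ⋃ r : Fin n, flim r '' A)
    (Fi : ℕ → Set X → Set X) (hFi : ∀ i A, Fi i A = ⋃ r : Fin n, f i r '' A)
    (φ : ℝ → ℝ)
    (hmap : ∀ t : ℝ, 0 ≤ t → 0 ≤ φ t)
    (hmono : ∀ s t : ℝ, 0 ≤ s → s ≤ t → φ s ≤ φ t)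
    (hiter : ∀ t : ℝ, 0 ≤ t → Tendsto (fun p => φ^[p] t) atTop (nhds 0))
    (hlt : ∀ t : ℝ, 0 < t → φ t < t)
    (hFcontr : ∀ A B : Set X, A.Nonempty → IsCompact A → B.Nonempty → IsCompact B →
      Metric.hausdorffDist (F A) (F B) ≤ φ (Metric.hausdorffDist A B)) :
    ∃ Astar : Set X, Astar.Nonempty ∧ IsCompact Astar ∧ F Astar = Astar ∧
      (∀ B : Set X, B.Nonempty → IsCompact B → F B = B → B = Astar) ∧
      ∀ P : Set X, P.Nonempty → IsCompact P → P ⊆ C →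
        Tendsto (fun k => Metric.hausdorffDist (fwdComp Fi k P) Astar)
          atTop (nhds 0) :=
  forward_SFS_trajectories_convergence_general n hn f flim φseq hmonoseq hiterseq hcontrseq C hCne
    hCcomp hinv hunif F hFdef Fi hFi φ hmono hiter hFcontr
end

section
/- Let {(x_i, y_i) : i = 0, 1, …, N} be a data set with x₀ < x₁ < ⋯ < x_N, I = [x₀, x_N], and for each i = 1, …, N let l_i : I → [x_{i−1}, x_i] be a homeomorphism with l_i(x₀) = x_{i−1}, l_i(x_N) = x_i. Fix a, b with all y_i ∈ [a,b], and let C*(I) denote the set of continuous functions f : I → [a,b] with f(x_i) = y_i for i = 0, …, N, endowed with the sup metric. Suppose F_{i,k} : I × [a,b] → [a,b] are continuous maps satisfying F_{i,k}(x₀, y₀) = y_{i−1}, F_{i,k}(x_N, y_N) = y_i, and |F_{i,k}(x, y) − F_{i,k}(x, y')| ≤ φ(|y − y'|) for all x ∈ I, y, y' ∈ [a,b], where φ : [0,∞) → [0,∞) is non-decreasing with φⁿ(t) → 0 for every t > 0. Then each Read–Bajraktarević operator T_k : C*(I) → C*(I), defined by (T_k f)(x) = F_{i,k}(l_i^{−1}(x),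 f(l_i^{−1}(x))) for x ∈ [x_{i−1}, x_i], satisfies d_{C(I)}(T_k g, T_k h) ≤ φ(d_{C(I)}(g, h)) for all g, h ∈ C*(I), i.e. T_k is a Matkowski φ-contraction. -/
open Filter Set Topology

lemma exists_piece (N : ℕ) (hN : 0 < N) (x : ℕ → ℝ)
    (hx : ∀ i, i < N → x i < x (i + 1))
    (s : ℝ) (hs : s ∈ Set.Icc (x 0) (x N)) :
    ∃ i, 1 ≤ i ∧ i ≤ N ∧ s ∈ Set.Icc (x (i - 1)) (x i) := by
  have hex : ∃ i, i ≤ N ∧ s ≤ x i := ⟨N, le_rfl, hs.2⟩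
  classical
  obtain ⟨hjN, hjs⟩ := Nat.find_spec hex
  rcases Nat.eq_zero_or_pos (Nat.find hex) with hj0 | hjpos
  · rw [hj0] at hjs
    refine ⟨1, le_rfl, hN, by simpa using hs.1, le_trans hjs (hx 0 hN).le⟩
  · refine ⟨Nat.find hex, hjpos, hjN, ?_, hjs⟩
    have hmin := Nat.find_min hex (Nat.sub_lt hjpos one_pos)
    push_neg at hmin
    have := hmin (le_trans (Nat.sub_le _ _) hjN)
    linarith

/-- For interpolation data `x₀ < x₁ < ⋯ < x_N`, `y i ∈ [a,b]`,
homeomorphisms `l i : I → [x_{i-1}, x_i]` (with inverses `linv i`) matching the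
endpoints, and continuous maps `F i k : I × [a,b] → [a,b]` matching the data at the
endpoints and Matkowski-contractive in the second variable with a common non-decreasing
`φ` with `φⁿ(t) → 0`, each Read–Bajraktarević operator `T_k` — defined on
`C*(I)` by `(T_k g)(s) = F i k (linv i s, g (linv i s))` for `s ∈ [x_{i-1}, x_i]` —
satisfies `d_{C(I)}(T_k g, T_k h) ≤ φ (d_{C(I)}(g, h))`, i.e. `T_k` is a Matkowski
`φ`-contraction for the sup metric. -/
theorem RB_operator_is_Matkowski_contraction
    (N : ℕ) (hN : 0 < N) (x y : ℕ → ℝ)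
    (hx : ∀ i, i < N → x i < x (i + 1))
    (a b : ℝ) (hy : ∀ i, i ≤ N → y i ∈ Set.Icc a b)
    (l linv : ℕ → ℝ → ℝ)
    (hl : ∀ i, 1 ≤ i → i ≤ N →
      Set.BijOn (l i) (Set.Icc (x 0) (x N)) (Set.Icc (x (i - 1)) (x i)) ∧
      ContinuousOn (l i) (Set.Icc (x 0) (x N)) ∧
      l i (x 0) = x (i - 1) ∧ l i (x N) = x i)
    (hlinv : ∀ i, 1 ≤ i → i ≤ N → ∀ s ∈ Set.Icc (x (i - 1)) (x i),
      linv i s ∈ Set.Icc (x 0) (x N) ∧ l i (linv i s) = s)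
    (hlinv' : ∀ i, 1 ≤ i → i ≤ N → ∀ t ∈ Set.Icc (x 0) (x N), linv i (l i t) = t)
    (φ : ℝ → ℝ)
    (hφmono : ∀ s t : ℝ, 0 ≤ s → s ≤ t → φ s ≤ φ t)
    (hφ0 : ∀ t : ℝ, 0 ≤ t → 0 ≤ φ t)
    (hφiter : ∀ t : ℝ, 0 < t → Tendsto (fun p => φ^[p] t) atTop (nhds 0))
    (F : ℕ → ℕ → ℝ → ℝ → ℝ)
    (hFcont : ∀ i k, 1 ≤ i → i ≤ N →
      ContinuousOn (fun p : ℝ × ℝ => F i k p.1 p.2)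
        (Set.Icc (x 0) (x N) ×ˢ Set.Icc a b))
    (hFmap : ∀ i k, 1 ≤ i → i ≤ N → ∀ t ∈ Set.Icc (x 0) (x N), ∀ s ∈ Set.Icc a b,
      F i k t s ∈ Set.Icc a b)
    (hFend : ∀ i k, 1 ≤ i → i ≤ N →
      F i k (x 0) (y 0) = y (i - 1) ∧ F i k (x N) (y N) = y i)
    (hFcontr : ∀ i k, 1 ≤ i → i ≤ N → ∀ t ∈ Set.Icc (x 0) (x N),
      ∀ s ∈ Set.Icc a b, ∀ s' ∈ Set.Icc a b,
        |F i k t s - F i k t s'| ≤ φ |s - s'|) :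
    ∀ k : ℕ, ∀ g h Tg Th : ℝ → ℝ,
      -- g, h ∈ C*(I)
      (ContinuousOn g (Set.Icc (x 0) (x N)) ∧
        (∀ t ∈ Set.Icc (x 0) (x N), g t ∈ Set.Icc a b) ∧
        ∀ i, i ≤ N → g (x i) = y i) →
      (ContinuousOn h (Set.Icc (x 0) (x N)) ∧
        (∀ t ∈ Set.Icc (x 0) (x N), h t ∈ Set.Icc a b) ∧
        ∀ i, i ≤ N → h (x i) = y i) →
      -- Tg = T_k g and Th = T_k h
      (∀ i, 1 ≤ i → i ≤ N → ∀ s ∈ Set.Icc (x (i - 1)) (x i),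
        Tg s = F i k (linv i s) (g (linv i s))) →
      (∀ i, 1 ≤ i → i ≤ N → ∀ s ∈ Set.Icc (x (i - 1)) (x i),
        Th s = F i k (linv i s) (h (linv i s))) →
      (⨆ s : Set.Icc (x 0) (x N), |Tg (s : ℝ) - Th (s : ℝ)|) ≤
        φ (⨆ s : Set.Icc (x 0) (x N), |g (s : ℝ) - h (s : ℝ)|) := by
  intro k g h Tg Th hg hh hTg hTh
  have hx0N : x 0 ≤ x N := by
    have : ∀ i, i ≤ N → x 0 ≤ x i := by
      intro i hi
      induction i with
      | zero => exact le_rfl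
      | succ n ih =>
        exact le_trans (ih (Nat.le_of_succ_le hi)) (hx n (Nat.lt_of_succ_le hi)).le
    exact this N le_rfl
  haveI : Nonempty (Set.Icc (x 0) (x N)) := ⟨⟨x 0, le_rfl, hx0N⟩⟩
  -- sup of |g - h| is bounded above
  have hbdd : BddAbove (Set.range fun s : Set.Icc (x 0) (x N) => |g (s : ℝ) - h (s : ℝ)|) := by
    have hc : ContinuousOn (fun t => |g t - h t|) (Set.Icc (x 0) (x N)) :=
      (hg.1.sub hh.1).abs
    have := (isCompact_Icc.image_of_continuousOn hc).bddAbove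
    rwa [show (Set.range fun s : Set.Icc (x 0) (x N) => |g (s : ℝ) - h (s : ℝ)|) =
      (fun t => |g t - h t|) '' Set.Icc (x 0) (x N) by ext r; simp [Set.restrict]]
  set M := ⨆ s : Set.Icc (x 0) (x N), |g (s : ℝ) - h (s : ℝ)| with hM
  have hM0 : 0 ≤ M := Real.iSup_nonneg fun s => abs_nonneg _
  have hle : ∀ t ∈ Set.Icc (x 0) (x N), |g t - h t| ≤ M := by
    intro t ht
    exact le_ciSup hbdd ⟨t, ht⟩
  refine Real.iSup_le ?_ (hφ0 M hM0)
  rintro ⟨s, hs⟩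
  obtain ⟨i, hi1, hiN, hsi⟩ := exists_piece N hN x hx s hs
  obtain ⟨htI, -⟩ := hlinv i hi1 hiN s hsi
  have hgI := hg.2.1 _ htI
  have hhI := hh.2.1 _ htI
  calc |Tg s - Th s| = |F i k (linv i s) (g (linv i s)) - F i k (linv i s) (h (linv i s))| := by
        rw [hTg i hi1 hiN s hsi, hTh i hi1 hiN s hsi]
    _ ≤ φ |g (linv i s) - h (linv i s)| := hFcontr i k hi1 hiN _ htI _ hgI _ hhI
    _ ≤ φ M := hφmono _ _ (abs_nonneg _) (hle _ htI)
end

section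
/- Let (X, d) be a metric space, let φ : [0,∞) → [0,∞) be a non-decreasing function, and let f₁, …, f_n : X → X each satisfy d(f_r(x), f_r(y)) ≤ φ(d(x,y)) for all x, y ∈ X. Then the induced Hutchinson set map F on the space H(X) of nonempty compact subsets of X, defined by F(A) = ⋃_{r=1}^n f_r(A), satisfies h_d(F(A), F(B)) ≤ φ(h_d(A,B)) for all A, B ∈ H(X), where h_d is the Hausdorff metric. -/
open Filter Set Topology

/-- If `f 0, …, f (n-1)` are all `φ`-contractive for a non-decreasing
`φ : [0,∞) → [0,∞)`, then the induced Hutchinson map `F(A) = ⋃ r, f r '' A` on nonempty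
compact subsets satisfies `h_d(F(A), F(B)) ≤ φ(h_d(A,B))`. -/
theorem hutchinson_map_phi_contractive {X : Type*} [MetricSpace X]
    (n : ℕ) (hn : 0 < n)
    (φ : ℝ → ℝ)
    (hmap : ∀ t : ℝ, 0 ≤ t → 0 ≤ φ t)
    (hmono : ∀ s t : ℝ, 0 ≤ s → s ≤ t → φ s ≤ φ t)
    (f : Fin n → X → X)
    (hf : ∀ r, ∀ x y : X, dist (f r x) (f r y) ≤ φ (dist x y)) :
    ∀ A B : Set X, A.Nonempty → B.Nonempty → IsCompact A → IsCompact B →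
      Metric.hausdorffDist (⋃ r : Fin n, f r '' A) (⋃ r : Fin n, f r '' B) ≤
        φ (Metric.hausdorffDist A B) := by
  intro A B hA hB hAc hBc
  have hne : EMetric.hausdorffEdist A B ≠ ⊤ :=
    Metric.hausdorffEdist_ne_top_of_nonempty_of_bounded hA hB hAc.isBounded hBc.isBounded
  have hφ0 : 0 ≤ φ (Metric.hausdorffDist A B) :=
    hmap _ Metric.hausdorffDist_nonneg
  apply Metric.hausdorffDist_le_of_mem_dist hφ0
  · rintro x hx
    simp only [Set.mem_iUnion] at hx
    obtain ⟨r, a, ha, rfl⟩ := hx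
    obtain ⟨b, hb, hdist⟩ := hBc.exists_infDist_eq_dist hB a
    refine ⟨f r b, Set.mem_iUnion.2 ⟨r, Set.mem_image_of_mem _ hb⟩, ?_⟩
    calc dist (f r a) (f r b) ≤ φ (dist a b) := hf r a b
      _ ≤ φ (Metric.hausdorffDist A B) := by
          apply hmono _ _ dist_nonneg
          rw [← hdist]
          exact Metric.infDist_le_hausdorffDist_of_mem ha hne
  · rintro x hx
    simp only [Set.mem_iUnion] at hx
    obtain ⟨r, b, hb, rfl⟩ := hx
    obtain ⟨a, ha, hdist⟩ := hAc.exists_infDist_eq_dist hA b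
    refine ⟨f r a, Set.mem_iUnion.2 ⟨r, Set.mem_image_of_mem _ ha⟩, ?_⟩
    calc dist (f r b) (f r a) ≤ φ (dist b a) := hf r b a
      _ ≤ φ (Metric.hausdorffDist A B) := by
          apply hmono _ _ dist_nonneg
          rw [← hdist, Metric.hausdorffDist_comm]
          exact Metric.infDist_le_hausdorffDist_of_mem hb
            (by rwa [EMetric.hausdorffEdist_comm])
end
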